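/- arXiv:1307.1676 — 3 statements merged into one kernel-verified Lean document; each statement's English description precedes it below -/
import Mathlib

section
/- Let F ∈ k[y_1,…,y_n] be a polynomial and let tdf(F) be the S-submodule of P generated by the top degree forms of all polynomials in the cyclic module ⟨F⟩_S. Then the Hilbert function of the associated graded ring of A = S/Ann(F) satisfies H_A(q) = dim_k tdf(⟨F⟩)_q for every q ≥ 0, where tdf(M)_q = (M ∩ P_{≤q} + P_{≤q−1})/P_{≤q−1}. -/
/-!
The pairing `⟨g, G⟩ = (g ∘ G)(0)` between `S` and `⟨F⟩` identifies `A = S/Ann(F)` with the dual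
of `⟨F⟩`: its left kernel is `Ann(F)` because `⟨h, g ∘ F⟩ = ⟨g, h ∘ F⟩`, and it is nondegenerate
on `⟨F⟩` because `⟨x^β, G⟩` is a nonzero multiple of the coefficient of `y^β` in `G`
(characteristic zero). Under this duality `𝔪^(q+1)` is orthogonal to exactly `⟨F⟩ ∩ P_{≤q}`,
since monomials of degree `> q` kill `P_{≤q}`. Hence `dim A/𝔪^j = dim ⟨F⟩ ∩ P_{≤j-1}`, and the
difference of two consecutive values is `dim tdf(⟨F⟩)_q` by rank–nullity for
`⟨F⟩ ∩ P_{≤q} → P/P_{≤q-1}`.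
-/

open MvPolynomial

set_option synthInstance.maxHeartbeats 1000000
set_option maxHeartbeats 1000000

noncomputable def pd {k : Type*} [CommSemiring k] {n : ℕ} (α : Fin n →₀ ℕ) :
    Module.End k (MvPolynomial (Fin n) k) :=
  (List.ofFn fun i : Fin n =>
    ((MvPolynomial.pderiv i).toLinearMap : Module.End k (MvPolynomial (Fin n) k)) ^ (α i)).prod

/-- The apolarity action of `S = k[x_1,…,x_n]` on `P = k[y_1,…,y_n]`,
obtained by letting `x_i` act as `∂/∂y_i`. -/
noncomputable def apol {k : Type*} [CommSemiring k] {n : ℕ}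
    (g F : MvPolynomial (Fin n) k) : MvPolynomial (Fin n) k :=
  (AddMonoidAlgebra.coeff g).sum fun α c => c • pd α F
/-- The apolar ideal `Ann(F)` of `F`, as an ideal of `S = k[x_1,…,x_n]`. -/
noncomputable def annIdeal {k : Type*} [CommRing k] {n : ℕ}
    (F : MvPolynomial (Fin n) k) : Ideal (MvPolynomial (Fin n) k) :=
  Ideal.span {g : MvPolynomial (Fin n) k | apol g F = 0}

/-- The apolar algebra `A = S/Ann(F)`. -/
abbrev ApolarAlgebra (k : Type*) [CommRing k] {n : ℕ}
    (F : MvPolynomial (Fin n) k) : Type _ :=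
  MvPolynomial (Fin n) k ⧸ annIdeal F

/-- The maximal ideal `𝔪 = (x_1,…,x_n)` of the apolar algebra. -/
noncomputable def maxIdeal {k : Type*} [CommRing k] {n : ℕ}
    (F : MvPolynomial (Fin n) k) : Ideal (ApolarAlgebra k F) :=
  Ideal.map (Ideal.Quotient.mk (annIdeal F)) (Ideal.span (Set.range MvPolynomial.X))

/-- `P_{≤ q−1}`: polynomials of degree at most `q − 1`, with `P_{≤ −1} = 0`. -/
noncomputable def degLT (k : Type*) [CommSemiring k] (n : ℕ) :
    ℕ → Submodule k (MvPolynomial (Fin n) k)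
  | 0 => ⊥
  | (q + 1) => MvPolynomial.restrictTotalDegree (Fin n) k q

/-- The underlying `k`-subspace of the cyclic `S`-module `⟨F⟩ = S ∘ F`. -/
noncomputable def cyclicModule {k : Type*} [CommSemiring k] {n : ℕ}
    (F : MvPolynomial (Fin n) k) : Submodule k (MvPolynomial (Fin n) k) :=
  Submodule.span k (Set.range fun g => apol g F)


namespace MvPolynomial

variable {R σ : Type*} [CommRing R]

theorem commute_pderiv (i j : σ) :
    Commute ((pderiv i).toLinearMap : Module.End R (MvPolynomial σ R)) (pderiv j).toLinearMap := by
  have h : ⁅(pderiv i : Derivation R (MvPolynomial σ R) (MvPolynomial σ R)), pderiv j⁆ = 0 :=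
    derivation_ext fun l => by
      classical
      rw [Derivation.commutator_apply]
      simp [pderiv_X, Pi.single_apply, apply_ite]
  refine LinearMap.ext fun p => sub_eq_zero.mp ?_
  simpa [Derivation.commutator_apply] using congr($h p)

/-- `aeval` needs a commutative target, so the partial derivatives are first collected in the
commutative subalgebra of `Module.End` that they generate. -/
noncomputable def apolarHom : MvPolynomial σ R →ₐ[R] Module.End R (MvPolynomial σ R) :=
  let D : σ → Module.End R (MvPolynomial σ R) := fun i => (pderiv i).toLinearMap
  have : IsMulCommutative (Algebra.adjoin R (Set.range D)) :=
    Algebra.isMulCommutative_adjoin R (by rintro _ ⟨i, rfl⟩ _ ⟨j, rfl⟩; exact commute_pderiv i j)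
  open scoped IsMulCommutative in
  (Algebra.adjoin R (Set.range D)).val.comp
    (aeval fun i => (⟨D i, Algebra.subset_adjoin ⟨i, rfl⟩⟩ : Algebra.adjoin R (Set.range D)))

@[simp]
theorem apolarHom_X (i : σ) : apolarHom (X i : MvPolynomial σ R) = (pderiv i).toLinearMap := by
  simp [apolarHom]

theorem apolarHom_monomial (β : σ →₀ ℕ) (c : R) :
    apolarHom (monomial β c) = c • apolarHom (monomial β (1 : R)) := by
  rw [← map_smul, smul_monomial, smul_eq_mul, mul_one]

theorem exists_coeff_apolarHom_X_pow (i : σ) (b : ℕ) (γ : σ →₀ ℕ) :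
    ∃ c : ℕ, 0 < c ∧ ∀ G : MvPolynomial σ R,
      coeff γ (apolarHom (X i ^ b) G) = c * coeff (γ + Finsupp.single i b) G := by
  induction b generalizing γ with
  | zero => exact ⟨1, one_pos, fun G => by simp⟩
  | succ b ih =>
    obtain ⟨c, hc, h⟩ := ih γ
    refine ⟨c * (γ i + b + 1), Nat.mul_pos hc (Nat.succ_pos _), fun G => ?_⟩
    rw [pow_succ, map_mul, Module.End.mul_apply, h, apolarHom_X, Derivation.coeFn_coe,
      coeff_pderiv, add_assoc, ← Finsupp.single_add, Finsupp.add_apply, Finsupp.single_eq_same]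
    push_cast
    ring

/-- The constant is `∏ i, (γ i + β i)! / (γ i)!`; only its positivity matters. -/
theorem exists_coeff_apolarHom_monomial (β γ : σ →₀ ℕ) :
    ∃ c : ℕ, 0 < c ∧ ∀ G : MvPolynomial σ R,
      coeff γ (apolarHom (monomial β 1) G) = c * coeff (γ + β) G := by
  induction β using Finsupp.induction_linear generalizing γ with
  | zero => exact ⟨1, one_pos, fun G => by simp⟩
  | add β₁ β₂ h₁ h₂ =>
    obtain ⟨c₁, hc₁, h₁⟩ := h₁ γ
    obtain ⟨c₂, hc₂, h₂⟩ := h₂ (γ + β₁)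
    refine ⟨c₁ * c₂, Nat.mul_pos hc₁ hc₂, fun G => ?_⟩
    rw [← mul_one (1 : R), ← monomial_mul, map_mul, Module.End.mul_apply, h₁, h₂, add_assoc]
    push_cast
    ring
  | single i b =>
    rw [← X_pow_eq_monomial]
    exact exists_coeff_apolarHom_X_pow i b γ

theorem apolarHom_monomial_apply_eq_zero_of_totalDegree_lt {β : σ →₀ ℕ} {G : MvPolynomial σ R}
    (h : G.totalDegree < β.degree) : apolarHom (monomial β 1) G = 0 := by
  ext γ
  obtain ⟨c, -, hc⟩ := exists_coeff_apolarHom_monomial (R := R) β γ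
  rw [hc, coeff_zero, coeff_eq_zero_of_totalDegree_lt, mul_zero]
  calc G.totalDegree < β.degree := h
    _ ≤ (γ + β).degree := Finsupp.degree_mono le_add_self

theorem apolarHom_apply_eq_zero_of_totalDegree_lt {g G : MvPolynomial σ R}
    (h : ∀ α ∈ g.support, G.totalDegree < α.degree) : apolarHom g G = 0 := by
  rw [g.as_sum, map_sum, LinearMap.sum_apply]
  refine Finset.sum_eq_zero fun α hα => ?_
  rw [apolarHom_monomial, LinearMap.smul_apply,
    apolarHom_monomial_apply_eq_zero_of_totalDegree_lt (h α hα), smul_zero]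

theorem apolarHom_mem_restrictTotalDegree (g : MvPolynomial σ R) {G : MvPolynomial σ R} {d : ℕ}
    (hG : G ∈ restrictTotalDegree σ R d) : apolarHom g G ∈ restrictTotalDegree σ R d := by
  induction g using induction_on' with
  | monomial β c =>
    rw [apolarHom_monomial, LinearMap.smul_apply]
    refine Submodule.smul_mem _ c ?_
    rw [mem_restrictTotalDegree] at hG ⊢
    refine Finset.sup_le fun γ hγ => ?_
    obtain ⟨c, -, hc⟩ := exists_coeff_apolarHom_monomial (R := R) β γ
    have hγβ : γ + β ∈ G.support := by
      rw [mem_support_iff, hc] at hγ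
      exact mem_support_iff.mpr (right_ne_zero_of_mul hγ)
    calc γ.degree ≤ (γ + β).degree := Finsupp.degree_mono le_self_add
      _ ≤ G.totalDegree := le_totalDegree hγβ
      _ ≤ d := hG
  | add g₁ g₂ h₁ h₂ =>
    rw [map_add, LinearMap.add_apply]
    exact add_mem h₁ h₂

variable [NoZeroDivisors R] [CharZero R]

theorem coeff_zero_apolarHom_monomial_eq_zero_iff (β : σ →₀ ℕ) (G : MvPolynomial σ R) :
    coeff 0 (apolarHom (monomial β 1) G) = 0 ↔ coeff β G = 0 := by
  obtain ⟨c, hc, hβ⟩ := exists_coeff_apolarHom_monomial (R := R) β 0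
  rw [hβ, zero_add, mul_eq_zero, or_iff_right (Nat.cast_ne_zero.mpr hc.ne')]

theorem eq_zero_of_forall_coeff_zero_apolarHom {G : MvPolynomial σ R}
    (h : ∀ g, coeff 0 (apolarHom g G) = 0) : G = 0 :=
  ext _ _ fun β => (coeff_zero_apolarHom_monomial_eq_zero_iff β G).mp (h _)

end MvPolynomial

theorem finrank_quotient_sup_ker_eq_finrank_dualCoannihilator {K V W : Type*} [Field K]
    [AddCommGroup V] [Module K V] [AddCommGroup W] [Module K W] [FiniteDimensional K W]
    (f : V →ₗ[K] Module.Dual K W) (hf : Function.Injective f.flip) (U : Submodule K V) :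
    Module.finrank K (V ⧸ U ⊔ LinearMap.ker f) =
      Module.finrank K (U.map f).dualCoannihilator := by
  have hsurj : Function.Surjective ((U.map f).mkQ ∘ₗ f) :=
    (Submodule.mkQ_surjective _).comp (LinearMap.flip_injective_iff₂.mp hf)
  have hker : LinearMap.ker ((U.map f).mkQ ∘ₗ f) = U ⊔ LinearMap.ker f := by
    rw [LinearMap.ker_comp, Submodule.ker_mkQ, Submodule.comap_map_eq]
  have h₁ := Submodule.finrank_quotient_add_finrank (U.map f)
  have h₂ := Subspace.finrank_add_finrank_dualCoannihilator_eq (U.map f)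
  rw [Subspace.dual_finrank_eq] at h₁
  rw [((Submodule.quotEquivOfEq _ _ hker.symm).trans
    (LinearMap.quotKerEquivOfSurjective _ hsurj)).finrank_eq]
  omega

namespace Submodule

variable {K V : Type*} [DivisionRing K] [AddCommGroup V] [Module K V]

theorem finrank_comap_subtype (p q : Submodule K V) :
    Module.finrank K (q.comap p.subtype) = Module.finrank K (p ⊓ q : Submodule K V) := by
  rw [← finrank_map_subtype_eq, map_comap_subtype]

theorem finrank_map_mkQ_add_finrank_inf (p N : Submodule K V) [FiniteDimensional K N] :
    Module.finrank K (N.map p.mkQ) + Module.finrank K (N ⊓ p : Submodule K V) =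
      Module.finrank K N := by
  have h := LinearMap.finrank_range_add_finrank_ker (p.mkQ.domRestrict N)
  rwa [LinearMap.range_domRestrict, LinearMap.ker_domRestrict, ker_mkQ,
    finrank_comap_subtype] at h

end Submodule

section Apolarity

variable {k : Type*} [CommRing k] {n : ℕ} (F : MvPolynomial (Fin n) k)

theorem pd_eq_apolarHom_monomial (α : Fin n →₀ ℕ) : pd α = apolarHom (monomial α (1 : k)) := by
  rw [pd, ← prod_X_pow_eq_monomial, Finset.prod_subset (Finset.subset_univ _)
    (fun i _ hi => by rw [Finsupp.notMem_support_iff.mp hi, pow_zero]), ← List.prod_ofFn,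
    map_list_prod, List.map_ofFn]
  simp [Function.comp_def]

theorem apol_eq_apolarHom (g : MvPolynomial (Fin n) k) : apol g F = apolarHom g F := by
  conv_rhs => rw [g.as_sum]
  simp only [apol, pd_eq_apolarHom_monomial, map_sum, LinearMap.sum_apply, Finsupp.sum]
  refine Finset.sum_congr rfl fun α _ => ?_
  rw [apolarHom_monomial α (coeff α g), LinearMap.smul_apply]
  rfl

theorem mem_cyclicModule_iff {G : MvPolynomial (Fin n) k} :
    G ∈ cyclicModule F ↔ ∃ g, apolarHom g F = G := by
  have : (fun g => apol g F) = LinearMap.applyₗ F ∘ₗ apolarHom.toLinearMap :=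
    funext (apol_eq_apolarHom F)
  rw [cyclicModule, this, ← LinearMap.coe_range, Submodule.span_eq]
  rfl

theorem apolarHom_apply_mem_cyclicModule (g : MvPolynomial (Fin n) k) :
    apolarHom g F ∈ cyclicModule F :=
  (mem_cyclicModule_iff F).mpr ⟨g, rfl⟩

theorem cyclicModule_le_restrictTotalDegree :
    cyclicModule F ≤ restrictTotalDegree (Fin n) k F.totalDegree := by
  intro G hG
  obtain ⟨g, rfl⟩ := (mem_cyclicModule_iff F).mp hG
  exact apolarHom_mem_restrictTotalDegree g ((mem_restrictTotalDegree _ _ _).mpr le_rfl)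

theorem mem_annIdeal_iff {g : MvPolynomial (Fin n) k} : g ∈ annIdeal F ↔ apolarHom g F = 0 := by
  refine ⟨fun hg => ?_, fun hg => Ideal.subset_span ((apol_eq_apolarHom F g).trans hg)⟩
  induction hg using Submodule.span_induction with
  | mem _ hx => exact (apol_eq_apolarHom F _).symm.trans hx
  | zero => rw [map_zero, LinearMap.zero_apply]
  | add _ _ _ _ hx hy => rw [map_add, LinearMap.add_apply, hx, hy, add_zero]
  | smul h _ _ hx => rw [smul_eq_mul, map_mul, Module.End.mul_apply, hx, map_zero]

theorem apolarHom_eq_zero_on_cyclicModule {g : MvPolynomial (Fin n) k} (hg : apolarHom g F = 0)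
    {G : MvPolynomial (Fin n) k} (hG : G ∈ cyclicModule F) : apolarHom g G = 0 := by
  obtain ⟨h, rfl⟩ := (mem_cyclicModule_iff F).mp hG
  rw [← Module.End.mul_apply, ← map_mul, mul_comm, map_mul, Module.End.mul_apply, hg, map_zero]

noncomputable def apolarPairing : MvPolynomial (Fin n) k →ₗ[k] Module.Dual k (cyclicModule F) where
  toFun g := lcoeff k 0 ∘ₗ apolarHom g ∘ₗ (cyclicModule F).subtype
  map_add' g h := by ext; simp
  map_smul' c g := by ext; simp

theorem apolarPairing_apply (g : MvPolynomial (Fin n) k) (G : cyclicModule F) :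
    apolarPairing F g G = coeff 0 (apolarHom g G) :=
  rfl

variable [NoZeroDivisors k] [CharZero k]

theorem ker_apolarPairing : LinearMap.ker (apolarPairing F) = (annIdeal F).restrictScalars k := by
  ext g
  rw [LinearMap.mem_ker, Submodule.restrictScalars_mem, mem_annIdeal_iff]
  refine ⟨fun hg => eq_zero_of_forall_coeff_zero_apolarHom fun h => ?_, fun hg => ?_⟩
  · rw [← Module.End.mul_apply, ← map_mul, mul_comm, map_mul, Module.End.mul_apply]
    exact congr($hg ⟨_, apolarHom_apply_mem_cyclicModule F h⟩)
  · ext ⟨G, hG⟩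
    rw [apolarPairing_apply, apolarHom_eq_zero_on_cyclicModule F hg hG, coeff_zero,
      LinearMap.zero_apply]

theorem apolarPairing_flip_injective : Function.Injective (apolarPairing F).flip :=
  (injective_iff_map_eq_zero _).mpr fun _ hG =>
    Subtype.ext (eq_zero_of_forall_coeff_zero_apolarHom fun g => congr($hG g))

end Apolarity

section HilbertFunction

variable {k : Type*} [Field k] {n : ℕ}

theorem degLT_le_restrictTotalDegree (q : ℕ) : degLT k n q ≤ restrictTotalDegree (Fin n) k q := by
  cases q with
  | zero => exact bot_le
  | succ q =>
    intro G hG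
    rw [degLT, mem_restrictTotalDegree] at hG
    rw [mem_restrictTotalDegree]
    omega

variable (F : MvPolynomial (Fin n) k)

instance : FiniteDimensional k (cyclicModule F) :=
  Submodule.finiteDimensional_of_le (cyclicModule_le_restrictTotalDegree F)

variable [CharZero k]

theorem dualCoannihilator_map_apolarPairing_pow (q : ℕ) :
    (((idealOfVars (Fin n) k ^ (q + 1)).restrictScalars k).map
      (apolarPairing F)).dualCoannihilator =
      (restrictTotalDegree (Fin n) k q).comap (cyclicModule F).subtype := by
  ext G
  simp only [Submodule.mem_dualCoannihilator, Submodule.mem_map, Submodule.restrictScalars_mem,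
    Submodule.mem_comap, Submodule.coe_subtype, mem_restrictTotalDegree]
  constructor
  · intro h
    by_contra! hq
    obtain ⟨β, hβ, hdeg⟩ := Finset.lt_sup_iff.mp hq
    refine mem_support_iff.mp hβ ((coeff_zero_apolarHom_monomial_eq_zero_iff β _).mp ?_)
    exact h _ ⟨monomial β 1, (monomial_mem_pow_idealOfVars_iff _ _ one_ne_zero).mpr hdeg, rfl⟩
  · rintro hdeg _ ⟨g, hg, rfl⟩
    rw [apolarPairing_apply, apolarHom_apply_eq_zero_of_totalDegree_lt, coeff_zero]
    exact fun α hα => hdeg.trans_lt ((mem_pow_idealOfVars_iff _ _).mp hg α hα)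

theorem finrank_quotient_maxIdeal_pow_succ (q : ℕ) :
    Module.finrank k (ApolarAlgebra k F ⧸ maxIdeal F ^ (q + 1)) =
      Module.finrank k (cyclicModule F ⊓ restrictTotalDegree (Fin n) k q : Submodule k _) := by
  set J := idealOfVars (Fin n) k ^ (q + 1)
  have hm : maxIdeal F ^ (q + 1) = J.map (Ideal.Quotient.mkₐ k (annIdeal F)) := by
    rw [maxIdeal, ← Ideal.map_pow]
    rfl
  have e := ((Ideal.quotientEquivAlgOfEq k hm).trans
    (DoubleQuot.quotQuotEquivQuotSupₐ k (annIdeal F) J)).toLinearEquiv.trans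
    (Submodule.Quotient.restrictScalarsEquiv k _).symm
  rw [e.finrank_eq, sup_comm, Submodule.restrictScalars_sup, ← ker_apolarPairing,
    finrank_quotient_sup_ker_eq_finrank_dualCoannihilator _ (apolarPairing_flip_injective F),
    dualCoannihilator_map_apolarPairing_pow, Submodule.finrank_comap_subtype]

theorem finrank_quotient_maxIdeal_pow (j : ℕ) :
    Module.finrank k (ApolarAlgebra k F ⧸ maxIdeal F ^ j) =
      Module.finrank k (cyclicModule F ⊓ degLT k n j : Submodule k _) := by
  cases j with
  | zero =>
    rw [(pow_zero _ : maxIdeal F ^ 0 = 1), Ideal.one_eq_top, degLT, inf_bot_eq, finrank_bot]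
    exact Module.finrank_zero_of_subsingleton
  | succ q => exact finrank_quotient_maxIdeal_pow_succ F q

end HilbertFunction

/-- The Hilbert function of `gr(A)` for `A = S/Ann(F)` equals the dimension of
the top-degree-form module of `⟨F⟩`: for every `q ≥ 0`,
`dim_k 𝔪^q/𝔪^{q+1} = dim_k tdf(⟨F⟩)_q` where
`tdf(M)_q = (M ∩ P_{≤q} + P_{≤q−1})/P_{≤q−1}`. -/
theorem hilbert_eq_tdf_dim {k : Type*} [Field k] [CharZero k] {n : ℕ}
    (F : MvPolynomial (Fin n) k) (q : ℕ) :
    Module.finrank k (ApolarAlgebra k F ⧸ (maxIdeal F) ^ (q + 1)) -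
      Module.finrank k (ApolarAlgebra k F ⧸ (maxIdeal F) ^ q) =
    Module.finrank k
      (Submodule.map (degLT k n q).mkQ
        (cyclicModule F ⊓ MvPolynomial.restrictTotalDegree (Fin n) k q)) := by
  have h := Submodule.finrank_map_mkQ_add_finrank_inf (degLT k n q)
    (cyclicModule F ⊓ MvPolynomial.restrictTotalDegree (Fin n) k q)
  rw [inf_assoc, inf_eq_right.mpr (degLT_le_restrictTotalDegree q)] at h
  rw [finrank_quotient_maxIdeal_pow_succ, finrank_quotient_maxIdeal_pow]
  omega
end

section
/- Let G ∈ k[y_1,…,y_m] be a homogeneous-free polynomial with σ ∘ G = 1 for some σ ∈ k[x_1,…,x_m] of order deg(G), let F = G + Σ_{j=m+1}^n y_j², and let A = S[n]/Ann(F). Then for all i with 1 ≤ i ≤ n and m+1 ≤ j ≤ n with i ≤ j, the product x_i x_j lies in Ann(F) + (σ); in particular the images of x_{m+1},…,x_n lie in the socle of S[n]/(Ann(F)+(σ)). -/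
/-!
For `j ≥ m` the variable `y_j` occurs in `F` only through `y_j²`, so `x_j ∘ F = 2 y_j`: hence
`x_i x_j ∘ F = 0` for `i ≠ j` and `x_j² ∘ F = 2`. As `σ` involves only `x_1, …, x_m`, it acts on
`Σ y_j²` through its constant term. If that term vanishes, `σ ∘ F = σ ∘ G = 1` and
`x_j² - 2σ ∈ Ann(F)`. Otherwise the order condition forces `G` to be constant, so `σ - σ(0)`
annihilates `F` and `Ann(F) + (σ)` contains the unit `σ(0)`.
-/

open MvPolynomial

theorem MvPolynomial.pderiv_comm {k σ : Type*} [CommSemiring k] (i j : σ)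
    (p : MvPolynomial σ k) : pderiv i (pderiv j p) = pderiv j (pderiv i p) := by
  obtain rfl | hij := eq_or_ne i j
  · rfl
  ext m
  simp only [coeff_pderiv, Finsupp.add_apply, Finsupp.single_eq_of_ne hij,
    Finsupp.single_eq_of_ne hij.symm, add_zero, add_right_comm m]
  ring

theorem MvPolynomial.pderiv_sum_X_sq {k : Type*} [CommSemiring k] {n : ℕ} (T : Finset (Fin n))
    (i : Fin n) :
    pderiv i (∑ t ∈ T, X t ^ 2 : MvPolynomial (Fin n) k) = if i ∈ T then (2 : k) • X i else 0 := by
  classical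
  simp [pderiv_X, Pi.single_apply, two_smul]

namespace Apolarity

section CommSemiring

variable {k : Type*} [CommSemiring k] {n : ℕ}

theorem pd_zero : pd (0 : Fin n →₀ ℕ) = (1 : Module.End k (MvPolynomial (Fin n) k)) :=
  List.prod_eq_one fun _ h => by
    obtain ⟨_, rfl⟩ := List.mem_ofFn.mp h
    exact pow_zero _

theorem pd_single (i : Fin n) (r : ℕ) :
    pd (Finsupp.single i r) = ((pderiv i).toLinearMap : Module.End k _) ^ r := by
  classical
  rw [pd, List.ofFn_eq_map, List.prod_map_eq_pow_single i, List.count_finRange, pow_one,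
    Finsupp.single_eq_same]
  intro t ht _
  rw [Finsupp.single_eq_of_ne ht, pow_zero]

open scoped IsMulCommutative in
theorem pd_add (α β : Fin n →₀ ℕ) : pd (α + β) = (pd α * pd β : Module.End k _) := by
  let D : Fin n → Module.End k (MvPolynomial (Fin n) k) := fun i => (pderiv i).toLinearMap
  let M := Submonoid.closure (Set.range D)
  have : IsMulCommutative M := Submonoid.isMulCommutative_closure _ <| by
    rintro _ ⟨i, rfl⟩ _ ⟨j, rfl⟩
    exact LinearMap.ext fun p => pderiv_comm i j p
  let d : Fin n → M := fun i => ⟨D i, Submonoid.subset_closure ⟨i, rfl⟩⟩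
  have pd_eq : ∀ γ : Fin n →₀ ℕ, pd γ = ((∏ i, d i ^ γ i : M) : Module.End k _) := fun γ => by
    rw [← List.prod_ofFn, Submonoid.coe_list_prod]
    simp [pd, d, D, Function.comp_def]
  simp only [pd_eq, Finsupp.add_apply, pow_add, Finset.prod_mul_distrib, Submonoid.coe_mul]

theorem pd_apply_eq_zero {α : Fin n →₀ ℕ} {i : Fin n} (hα : α i ≠ 0)
    {q : MvPolynomial (Fin n) k} (hq : pderiv i q = 0) : pd α q = 0 := by
  obtain ⟨β, rfl⟩ : ∃ β, α = β + Finsupp.single i 1 :=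
    ⟨α - Finsupp.single i 1, (tsub_add_cancel_of_le (Finsupp.single_le_iff.mpr
      (Nat.one_le_iff_ne_zero.mpr hα))).symm⟩
  rw [pd_add, pd_single, pow_one, Module.End.mul_apply, Derivation.coeFn_coe, hq, map_zero]

theorem apol_eq_sum (g F : MvPolynomial (Fin n) k) :
    apol g F = ∑ α ∈ g.support, coeff α g • pd α F := rfl

theorem apol_monomial (α : Fin n →₀ ℕ) (a : k) (F : MvPolynomial (Fin n) k) :
    apol (monomial α a) F = a • pd α F :=
  sum_monomial_eq (zero_smul k _)

theorem apol_C (a : k) (F : MvPolynomial (Fin n) k) : apol (C a) F = a • F := by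
  rw [C_apply, apol_monomial, pd_zero, Module.End.one_apply]

theorem apol_X (i : Fin n) (F : MvPolynomial (Fin n) k) : apol (X i) F = pderiv i F := by
  rw [X, apol_monomial, pd_single, pow_one, one_smul]
  rfl

theorem apol_add_left (g h F : MvPolynomial (Fin n) k) :
    apol (g + h) F = apol g F + apol h F :=
  Finsupp.sum_add_index' (fun _ => zero_smul k _) (fun _ _ _ => add_smul _ _ _)

theorem apol_add_right (g F F' : MvPolynomial (Fin n) k) :
    apol g (F + F') = apol g F + apol g F' := by
  simp only [apol_eq_sum, map_add, smul_add, Finset.sum_add_distrib]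

theorem apol_mul (p q F : MvPolynomial (Fin n) k) : apol (p * q) F = apol p (apol q F) := by
  induction p using MvPolynomial.induction_on' with
  | monomial α a =>
    induction q using MvPolynomial.induction_on' with
    | monomial β b =>
      rw [monomial_mul, apol_monomial, apol_monomial, apol_monomial, pd_add,
        Module.End.mul_apply, map_smul, smul_smul]
    | add q q' hq hq' => rw [mul_add, apol_add_left, apol_add_left, apol_add_right, hq, hq']
  | add p p' hp hp' => rw [add_mul, apol_add_left, apol_add_left, hp, hp']

theorem apol_eq_coeff_zero_smul {g q : MvPolynomial (Fin n) k}
    (h : ∀ i ∈ g.vars, pderiv i q = 0) : apol g q = coeff 0 g • q := by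
  rw [apol_eq_sum, Finset.sum_eq_single 0]
  · rw [pd_zero, Module.End.one_apply]
  · intro α hα hα0
    obtain ⟨i, hi⟩ := Finsupp.ne_iff.mp hα0
    have hig : i ∈ g.vars :=
      (mem_vars_iff_mem_support i).mpr ⟨α, hα, Finsupp.mem_support_iff.mpr hi⟩
    rw [pd_apply_eq_zero hi (h i hig), smul_zero]
  · intro h0
    rw [notMem_support_iff.mp h0, zero_smul]

end CommSemiring

section CommRing

variable {k : Type*} [CommRing k] {n : ℕ} {F σ : MvPolynomial (Fin n) k}

theorem apol_sub_left (g h F : MvPolynomial (Fin n) k) :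
    apol (g - h) F = apol g F - apol h F := by
  rw [eq_sub_iff_add_eq, ← apol_add_left, sub_add_cancel]

theorem mem_span_of_apol_eq_zero {g : MvPolynomial (Fin n) k} (hg : apol g F = 0) :
    g ∈ Ideal.span ({g | apol g F = 0} ∪ {σ}) :=
  Ideal.subset_span (Set.mem_union_left _ hg)

theorem self_mem_span : σ ∈ Ideal.span ({g | apol g F = 0} ∪ {σ}) :=
  Ideal.subset_span (Set.mem_union_right _ rfl)

theorem X_mul_X_mem_span {j : Fin n} {a : k} (hj : pderiv j F = a • X j) (hσF : apol σ F = 1)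
    (i : Fin n) : X i * X j ∈ Ideal.span ({g | apol g F = 0} ∪ {σ}) := by
  have hXX : apol (X i * X j) F = a • pderiv i (X j) := by
    rw [apol_mul, apol_X, apol_X, hj, Derivation.map_smul]
  obtain rfl | hij := eq_or_ne i j
  · have hann : apol (X i * X i - C a * σ) F = 0 := by
      rw [apol_sub_left, hXX, apol_mul, apol_C, hσF, pderiv_X_self, sub_self]
    rw [← sub_add_cancel (X i * X i) (C a * σ)]
    exact add_mem (mem_span_of_apol_eq_zero hann) (Ideal.mul_mem_left _ _ self_mem_span)
  · refine mem_span_of_apol_eq_zero ?_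
    rw [hXX, pderiv_X_of_ne hij.symm, smul_zero]

theorem span_eq_top_of_isUnit_coeff_zero (hσF : ∀ i ∈ σ.vars, pderiv i F = 0)
    (hc : IsUnit (coeff 0 σ)) : Ideal.span ({g | apol g F = 0} ∪ {σ}) = ⊤ := by
  have hann : apol (σ - C (coeff 0 σ)) F = 0 := by
    rw [apol_sub_left, apol_C, apol_eq_coeff_zero_smul hσF, sub_self]
  refine Ideal.eq_top_of_isUnit_mem _ ?_ (hc.map C)
  rw [← sub_sub_cancel σ (C (coeff 0 σ))]
  exact sub_mem self_mem_span (mem_span_of_apol_eq_zero hann)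

end CommRing

end Apolarity

open Apolarity in
theorem mixed_products_in_socle_general {k : Type*} [Field k] {m n : ℕ}
    (G σ : MvPolynomial (Fin n) k)
    (hG : G ∈ MvPolynomial.supported k {i : Fin n | (i : ℕ) < m})
    (hσ : σ ∈ MvPolynomial.supported k {i : Fin n | (i : ℕ) < m})
    (hσord : ∀ d ∈ σ.support, G.totalDegree ≤ d.sum fun _ e => e)
    (hσG : apol σ G = 1)
    (F : MvPolynomial (Fin n) k)
    (hF : F = G + ∑ j ∈ Finset.univ.filter (fun j : Fin n => m ≤ (j : ℕ)),
      MvPolynomial.X j ^ 2)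
    (I : Ideal (MvPolynomial (Fin n) k))
    (hI : I = Ideal.span ({g : MvPolynomial (Fin n) k | apol g F = 0} ∪ {σ})) :
    (∀ i j : Fin n, m ≤ (j : ℕ) → i ≤ j → MvPolynomial.X i * MvPolynomial.X j ∈ I) ∧
    (∀ j : Fin n, m ≤ (j : ℕ) → ∀ i : Fin n,
      Ideal.Quotient.mk I (MvPolynomial.X j) *
        Ideal.Quotient.mk I (MvPolynomial.X i) = 0) := by
  subst hF
  set T := Finset.univ.filter (fun j : Fin n => m ≤ (j : ℕ))
  have hT : ∀ {i : Fin n}, i ∈ T ↔ m ≤ (i : ℕ) := by simp [T]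
  have hσT : ∀ i ∈ σ.vars, pderiv i (∑ t ∈ T, X t ^ 2 : MvPolynomial (Fin n) k) = 0 :=
    fun i hi => by rw [pderiv_sum_X_sq, if_neg (hT.not.mpr (not_le.mpr (mem_supported.mp hσ hi)))]
  have hmem : ∀ i j : Fin n, m ≤ (j : ℕ) → X i * X j ∈ I := by
    intro i j hj
    rw [hI]
    by_cases hc : coeff 0 σ = 0
    · refine X_mul_X_mem_span (a := 2) ?_ ?_ i
      · rw [map_add, pderiv_eq_zero_of_notMem_vars fun h => (mem_supported.mp hG h).not_ge hj,
          pderiv_sum_X_sq, if_pos (hT.mpr hj), zero_add]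
      · rw [apol_add_right, hσG, apol_eq_coeff_zero_smul hσT, hc, zero_smul, add_zero]
    · have hG0 : G.vars = ∅ := by
        have h := hσord 0 (mem_support_iff.mpr hc)
        rw [Finsupp.sum_zero_index, Nat.le_zero, totalDegree_eq_zero_iff_eq_C] at h
        rw [h, vars_C]
      rw [span_eq_top_of_isUnit_coeff_zero ?_ (Ne.isUnit hc)]
      · exact Submodule.mem_top
      · intro i hi
        rw [map_add, pderiv_eq_zero_of_notMem_vars (by simp [hG0]), hσT i hi, add_zero]
  refine ⟨fun i j hj _ => hmem i j hj, fun j hj i => ?_⟩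
  rw [← map_mul, mul_comm, Ideal.Quotient.eq_zero_iff_mem]
  exact hmem i j hj

/-- With `F = G + Σ_{j=m+1}^n y_j²`, `σ ∈ k[x_1,…,x_m]` of order `deg G` with
`σ ∘ G = 1`: all products `x_i x_j` with `i ≤ j`, `j ≥ m+1` lie in
`Ann(F) + (σ)`; in particular the images of `x_{m+1},…,x_n` lie in the socle
of `S[n]/(Ann(F)+(σ))` (they are killed by the maximal ideal `(x_1,…,x_n)`). -/
theorem mixed_products_in_socle {k : Type*} [Field k] [CharZero k] {m n : ℕ}
    (hmn : m ≤ n) (G σ : MvPolynomial (Fin n) k)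
    (hG : G ∈ MvPolynomial.supported k {i : Fin n | (i : ℕ) < m})
    (hσ : σ ∈ MvPolynomial.supported k {i : Fin n | (i : ℕ) < m})
    (hσord : ∀ d ∈ σ.support, G.totalDegree ≤ d.sum fun _ e => e)
    (hσG : apol σ G = 1)
    (F : MvPolynomial (Fin n) k)
    (hF : F = G + ∑ j ∈ Finset.univ.filter (fun j : Fin n => m ≤ (j : ℕ)),
      MvPolynomial.X j ^ 2)
    (I : Ideal (MvPolynomial (Fin n) k))
    (hI : I = Ideal.span ({g : MvPolynomial (Fin n) k | apol g F = 0} ∪ {σ})) :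
    (∀ i j : Fin n, m ≤ (j : ℕ) → i ≤ j → MvPolynomial.X i * MvPolynomial.X j ∈ I) ∧
    (∀ j : Fin n, m ≤ (j : ℕ) → ∀ i : Fin n,
      Ideal.Quotient.mk I (MvPolynomial.X j) *
        Ideal.Quotient.mk I (MvPolynomial.X i) = 0) :=
  mixed_products_in_socle_general G σ hG hσ hσord hσG F hF I hI
end

section
/- Suppose the symmetric decomposition of the Hilbert function of a local Artinian Gorenstein algebra A with sdeg(A) ≥ 7 and dim_k(A) ≤ 16 has first row (1,1,…,1) (i.e., a_1 = 1) and A is not 3-stretched. If additionally H_A(2) ≤ 4 fails to force f_3 ≤ 4, then the decomposition must be (1,1,…,1) + (0,4,4,0), which gives H_A(2) ≥ 5, a contradiction; hence in fact f_3 ≤ 4. -/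
/-!
Every row `a ≥ 1` of the decomposition contributes at least `2 · Q a 1` to `dim_k A`, since by
symmetry `Q a 1 = Q a (s - a - 1)`. Non-3-stretchedness puts a nonzero entry of some row `b ≥ 1`
in degree `i ≥ 4`; that row has no gaps, so it also has a nonzero entry in degree `2`, and it
contributes strictly more. As the first row alone contributes `s + 1 ≥ 8`, the remaining rows
satisfy `2 · Σ_{a ≥ 1} Q a 1 < 8`, whence `f₃ = 1 + Σ_{a ≥ 1} Q a 1 ≤ 4`.
-/

open Finset

theorem two_mul_le_sum_range {f : ℕ → ℕ} {n L : ℕ} (hL : 2 ≤ L) (hLn : L < n)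
    (hf : f 1 = f L) : 2 * f 1 ≤ ∑ i ∈ range n, f i :=
  calc 2 * f 1 = ∑ i ∈ {1, L}, f i := by rw [sum_pair (by omega)]; omega
    _ ≤ ∑ i ∈ range n, f i :=
      sum_le_sum_of_subset <| by
        simp only [insert_subset_iff, singleton_subset_iff, mem_range]; omega

theorem two_mul_lt_sum_range {f : ℕ → ℕ} {n L j : ℕ} (hj : 1 < j) (hjL : j < L)
    (hLn : L < n) (hf : f 1 = f L) (hfj : f j ≠ 0) : 2 * f 1 < ∑ i ∈ range n, f i :=
  calc 2 * f 1 < ∑ i ∈ {1, j, L}, f i := by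
        rw [sum_insert (by simp only [mem_insert, mem_singleton]; omega), sum_pair (by omega)]
        omega
    _ ≤ ∑ i ∈ range n, f i :=
      sum_le_sum_of_subset <| by
        simp only [insert_subset_iff, singleton_subset_iff, mem_range]; omega

theorem exists_ne_zero_of_two_le_sum_range {g : ℕ → ℕ} {n : ℕ} (h0 : g 0 ≤ 1)
    (h : 2 ≤ ∑ a ∈ range n, g a) : ∃ b, 1 ≤ b ∧ b < n ∧ g b ≠ 0 := by
  by_contra! hzero
  have hn : 0 < n := Nat.pos_of_ne_zero (by rintro rfl; simp at h)
  rw [sum_range_eq_add_Ico _ hn,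
    sum_eq_zero fun a ha => hzero a (mem_Ico.1 ha).1 (mem_Ico.1 ha).2] at h
  omega

theorem le_sub_one_of_row_ne_zero {s : ℕ} {Q : ℕ → ℕ → ℕ}
    (hsym : ∀ a, a ≤ s - 2 → ∀ i, i ≤ s - a → Q a i = Q a (s - a - i))
    (hzero0 : ∀ a, 1 ≤ a → Q a 0 = 0)
    (hvanish : ∀ a i, s - a < i → Q a i = 0)
    {a i : ℕ} (ha1 : 1 ≤ a) (ha : a ≤ s - 2) (h : Q a i ≠ 0) : i ≤ s - a - 1 := by
  by_contra! hi
  obtain hi' | hi' := le_or_gt i (s - a)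
  · rw [hsym a ha i hi', show s - a - i = 0 by omega, hzero0 a ha1] at h
    exact h rfl
  · exact h (hvanish a i hi')

theorem socle_ge_seven_f3_le_four_general (s : ℕ) (Q : ℕ → ℕ → ℕ)
    (hs : 7 ≤ s)
    (hrow0 : ∀ i, i ≤ s → Q 0 i = 1)
    (hsym : ∀ a, a ≤ s - 2 → ∀ i, i ≤ s - a → Q a i = Q a (s - a - i))
    (hzero0 : ∀ a, 1 ≤ a → Q a 0 = 0)
    (hvanish : ∀ a i, s - a < i → Q a i = 0)
    (hnozero : ∀ a, 1 ≤ a → a ≤ s - 2 → ∀ i j, 1 ≤ i → i ≤ j → j ≤ s - a - 1 →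
      Q a j ≠ 0 → Q a i ≠ 0)
    (hdim : ∑ i ∈ Finset.range (s + 1), (∑ a ∈ Finset.range (s - 1), Q a i) ≤ 16)
    (hnot3str : ∃ i, 4 ≤ i ∧ 2 ≤ ∑ a ∈ Finset.range (s - 1), Q a i) :
    ∑ a ∈ Finset.range (s - 2), Q a 1 ≤ 4 := by
  obtain ⟨i, hi4, hHi⟩ := hnot3str
  have hQ0i : Q 0 i ≤ 1 := by
    obtain hi | hi := le_or_gt i s
    · exact (hrow0 i hi).le
    · exact (hvanish 0 i hi).trans_le zero_le_one
  obtain ⟨b, hb1, hbs, hbi⟩ := exists_ne_zero_of_two_le_sum_range hQ0i hHi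
  have hib := le_sub_one_of_row_ne_zero hsym hzero0 hvanish hb1 (by omega) hbi
  set cost : ℕ → ℕ := fun a => ∑ i ∈ range (s + 1), Q a i
  have hcost : ∀ a ∈ Ico 1 (s - 2), 2 * Q a 1 ≤ cost a := fun a ha => by
    have := mem_Ico.1 ha
    exact two_mul_le_sum_range (L := s - a - 1) (by omega) (by omega)
      (hsym a (by omega) 1 (by omega))
  have hcost_b : 2 * Q b 1 < cost b :=
    two_mul_lt_sum_range (j := 2) (L := s - b - 1) one_lt_two (by omega) (by omega)
      (hsym b (by omega) 1 (by omega))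
      (hnozero b hb1 (by omega) 2 i one_le_two (by omega) hib hbi)
  have hrows : 2 * ∑ a ∈ Ico 1 (s - 2), Q a 1 < ∑ a ∈ Ico 1 (s - 2), cost a := by
    rw [mul_sum]
    exact sum_lt_sum hcost ⟨b, mem_Ico.2 ⟨hb1, by omega⟩, hcost_b⟩
  have hcost0 : cost 0 = s + 1 := by
    simp only [cost, sum_congr rfl fun j hj => hrow0 j (Nat.lt_succ_iff.1 (mem_range.1 hj)),
      sum_const, card_range, smul_eq_mul, mul_one]
  have hrest : s + 1 + ∑ a ∈ Ico 1 (s - 2), cost a ≤ 16 :=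
    calc s + 1 + ∑ a ∈ Ico 1 (s - 2), cost a ≤ cost 0 + ∑ a ∈ Ico 1 (s - 1), cost a := by
          rw [hcost0]; gcongr; omega
      _ = ∑ i ∈ range (s + 1), ∑ a ∈ range (s - 1), Q a i := by
          rw [← sum_range_eq_add_Ico _ (by omega), sum_comm]
      _ ≤ 16 := hdim
  rw [sum_range_eq_add_Ico _ (by omega), hrow0 1 (by omega)]
  omega

/-- Socle degree ≥ 7, dim ≤ 16 case of the rationality theorem, arithmetic of
the symmetric decomposition: `Q a` is the `a`-th row of the symmetric
decomposition of the Hilbert function `H i = Σ_{a=0}^{s−2} Q a i`, each row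
being symmetric about `(s−a)/2` with `Q a 0 = 0` for `a ≥ 1` and first row
`(1,1,…,1)` (i.e. `a₁ = 1`). If `A` is not 3-stretched (some `H i ≥ 2` with
`i ≥ 4`), `dim_k A = Σ_{i=0}^{s} H i ≤ 16` and `H 2 ≤ 4`, then
`f₃ = Σ_{a=0}^{s−3} Q a 1 ≤ 4`. -/
theorem socle_ge_seven_f3_le_four (s : ℕ) (Q : ℕ → ℕ → ℕ)
    (hs : 7 ≤ s)
    (hrow0 : ∀ i, i ≤ s → Q 0 i = 1)
    (hrow0' : ∀ i, s < i → Q 0 i = 0)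
    (hsym : ∀ a, a ≤ s - 2 → ∀ i, i ≤ s - a → Q a i = Q a (s - a - i))
    (hzero0 : ∀ a, 1 ≤ a → Q a 0 = 0)
    (hvanish : ∀ a i, s - a < i → Q a i = 0)
    (hnozero : ∀ a, 1 ≤ a → a ≤ s - 2 → ∀ i j, 1 ≤ i → i ≤ j → j ≤ s - a - 1 →
      Q a j ≠ 0 → Q a i ≠ 0)
    (hdim : ∑ i ∈ Finset.range (s + 1), (∑ a ∈ Finset.range (s - 1), Q a i) ≤ 16)
    (hH2 : (∑ a ∈ Finset.range (s - 1), Q a 2) ≤ 4)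
    (hnot3str : ∃ i, 4 ≤ i ∧ 2 ≤ ∑ a ∈ Finset.range (s - 1), Q a i) :
    ∑ a ∈ Finset.range (s - 2), Q a 1 ≤ 4 :=
  socle_ge_seven_f3_le_four_general s Q hs hrow0 hsym hzero0 hvanish hnozero hdim hnot3str
end
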